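/- arXiv:1412.2799 — 9 statements merged into one kernel-verified Lean document; each statement's English description precedes it below -/
import Mathlib

section
/- Let 0 < a ≤ 1/2 and let u, v be real numbers with 0 ≤ u < v. Then log₂((1+u)/(1+a·u)) + log₂(1+a·v) < (1/2)log₂(1+u) + (1/2)log₂(1+v) if and only if u + v + u·v < (1−2a)/a². (In other words, with u = ρ|h_m|² and v = ρ|h_n|², the NOMA sum rate R_m + R_n is smaller than the orthogonal-MA sum rate R̄_m + R̄_n exactly when ρ(|h_m|²+|h_n|²) + ρ²|h_m|²|h_n|² < (1−2a_n²)/a_n⁴.) -/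
/-- For `0 < a ≤ 1/2` and `0 ≤ u < v`, the two-user NOMA sum rate
`log₂((1+u)/(1+a·u)) + log₂(1+a·v)` is smaller than the orthogonal-MA sum rate
`(1/2)log₂(1+u) + (1/2)log₂(1+v)` iff `u + v + u·v < (1−2a)/a²`. -/
theorem noma_sum_rate_lt_oma_iff (a u v : ℝ) (ha0 : 0 < a) (ha : a ≤ 1 / 2)
    (hu : 0 ≤ u) (huv : u < v) :
    Real.logb 2 ((1 + u) / (1 + a * u)) + Real.logb 2 (1 + a * v) <
      (1 / 2) * Real.logb 2 (1 + u) + (1 / 2) * Real.logb 2 (1 + v) ↔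
    u + v + u * v < (1 - 2 * a) / a ^ 2 := by
  have hv : (0:ℝ) < v := lt_of_le_of_lt hu huv
  have h1u : (0:ℝ) < 1 + u := by linarith
  have h1v : (0:ℝ) < 1 + v := by linarith
  have h1au : (0:ℝ) < 1 + a * u := by nlinarith
  have h1av : (0:ℝ) < 1 + a * v := by nlinarith
  have hb : (1:ℝ) < 2 := one_lt_two
  set X : ℝ := (1 + u) / (1 + a * u) * (1 + a * v) with hX
  have hXpos : 0 < X := by positivity
  have hL : Real.logb 2 ((1 + u) / (1 + a * u)) + Real.logb 2 (1 + a * v)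
      = Real.logb 2 X := by
    rw [hX, Real.logb_mul (by positivity) (by positivity)]
  have hR : (1 / 2) * Real.logb 2 (1 + u) + (1 / 2) * Real.logb 2 (1 + v)
      = (1 / 2) * Real.logb 2 ((1 + u) * (1 + v)) := by
    rw [Real.logb_mul (by positivity) (by positivity)]; ring
  rw [hL, hR]
  have hPuv : (0:ℝ) < (1 + u) * (v - u) := mul_pos h1u (by linarith)
  have e2 : Real.logb 2 (X ^ 2) = 2 * Real.logb 2 X := by
    rw [Real.logb_pow]; norm_num
  have hX2pos : 0 < X ^ 2 := pow_pos hXpos 2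
  have step1 : Real.logb 2 X < (1 / 2) * Real.logb 2 ((1 + u) * (1 + v)) ↔
      X ^ 2 < (1 + u) * (1 + v) := by
    constructor
    · intro h
      have h2 : Real.logb 2 (X ^ 2) < Real.logb 2 ((1 + u) * (1 + v)) := by
        rw [e2]; linarith
      exact (Real.logb_lt_logb_iff hb hX2pos (by positivity)).mp h2
    · intro h
      have h2 := (Real.logb_lt_logb_iff hb hX2pos (by positivity)).mpr h
      rw [e2] at h2; linarith
  rw [step1]
  have hX2 : X ^ 2 = (1 + u) ^ 2 * (1 + a * v) ^ 2 / (1 + a * u) ^ 2 := by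
    rw [hX]; field_simp
  rw [hX2, div_lt_iff₀ (by positivity)]
  have key : (1 + u) ^ 2 * (1 + a * v) ^ 2 < (1 + u) * (1 + v) * (1 + a * u) ^ 2 ↔
      a ^ 2 * (u + v + u * v) < 1 - 2 * a := by
    constructor
    · intro h
      by_contra hc
      push_neg at hc
      nlinarith [mul_nonneg hPuv.le (by linarith : (0:ℝ) ≤ a ^ 2 * (u + v + u * v) - (1 - 2 * a))]
    · intro h
      nlinarith [mul_pos hPuv (by linarith : (0:ℝ) < 1 - 2 * a - a ^ 2 * (u + v + u * v))]
  rw [key, lt_div_iff₀ (by positivity)]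
  constructor <;> intro h <;> nlinarith
end

section
/- Let 0 < a ≤ 1/2 and u > 0. Then log₂(1 + u(1−a)/(u·a + 1)) > (1/2)log₂(1+u) if and only if u < (1−2a)/a². (Equivalently, with u = ρ|h_m|², the weaker user's NOMA rate R_m exceeds its orthogonal-MA rate R̄_m exactly when |h_m|² < (1−2a_n²)/(ρ a_n⁴).) -/
/-- For `0 < a ≤ 1/2` and `u > 0`, the weaker user's NOMA rate
`log₂(1 + u(1−a)/(u·a+1))` exceeds its orthogonal-MA rate `(1/2)log₂(1+u)`
iff `u < (1−2a)/a²`. -/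
theorem weak_user_noma_gt_oma_iff (a u : ℝ) (ha0 : 0 < a) (ha : a ≤ 1 / 2) (hu : 0 < u) :
    Real.logb 2 (1 + u * (1 - a) / (u * a + 1)) > (1 / 2) * Real.logb 2 (1 + u) ↔
    u < (1 - 2 * a) / a ^ 2 := by
  have hd : 0 < u * a + 1 := by positivity
  have h1u : (0:ℝ) < 1 + u := by linarith
  have harg : 1 + u * (1 - a) / (u * a + 1) = (1 + u) / (u * a + 1) := by
    field_simp; ring
  have hhalf : (1 / 2) * Real.logb 2 (1 + u) = Real.logb 2 (Real.sqrt (1 + u)) := by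
    rw [Real.logb, Real.logb, Real.log_sqrt h1u.le]; ring
  rw [harg, hhalf, gt_iff_lt,
    Real.logb_lt_logb_iff (b:=2) (by norm_num) (Real.sqrt_pos.mpr h1u),
    Real.sqrt_lt' (by positivity), div_pow, lt_div_iff₀ (by positivity)]
  constructor
  · intro h
    rw [lt_div_iff₀ (by positivity)]
    nlinarith [sq_nonneg u, sq_nonneg a, mul_pos hu ha0]
  · intro h
    rw [lt_div_iff₀ (by positivity)] at h
    have key : (u * a + 1) ^ 2 < 1 + u := by nlinarith [mul_pos hu ha0]
    nlinarith [mul_lt_mul_of_pos_left key h1u]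
  · positivity
end

section
/- Let ρ > 0, let a_n² ∈ [0,1] and a_m² = 1 − a_n², and let x, y be real numbers with 0 ≤ x ≤ y. Then log₂(1 + x·a_m²/(x·a_n² + 1/ρ)) + log₂(1 + ρ·a_n²·y) − log₂(1 + ρx) = log₂((1 + ρa_n²y)/(1 + ρa_n²x)), and this quantity is nonnegative. Hence CR-NOMA (serving both users) always achieves a sum rate at least as large as allocating the whole channel to the weaker user alone. -/
/-- With transmit SNR `ρ > 0`, power coefficients `a_n² ∈ [0,1]`,
`a_m² = 1 − a_n²`, and channel gains `0 ≤ x ≤ y`, the CR-NOMA sum rate exceeds the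
rate of serving the weaker user alone by exactly `log₂((1+ρa_n²y)/(1+ρa_n²x)) ≥ 0`. -/
theorem crnoma_sum_rate_gain (ρ an2 am2 x y : ℝ) (hρ : 0 < ρ)
    (han2 : an2 ∈ Set.Icc (0 : ℝ) 1) (ham2 : am2 = 1 - an2)
    (hx : 0 ≤ x) (hxy : x ≤ y) :
    Real.logb 2 (1 + x * am2 / (x * an2 + 1 / ρ)) + Real.logb 2 (1 + ρ * an2 * y) -
        Real.logb 2 (1 + ρ * x) =
      Real.logb 2 ((1 + ρ * an2 * y) / (1 + ρ * an2 * x)) ∧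
    0 ≤ Real.logb 2 ((1 + ρ * an2 * y) / (1 + ρ * an2 * x)) := by
  obtain ⟨h0, h1⟩ := han2
  have hxnn : 0 ≤ ρ * an2 * x := by positivity
  have hpx : (0:ℝ) < 1 + ρ * an2 * x := by linarith
  have hyx : 0 ≤ ρ * an2 * (y - x) := mul_nonneg (mul_nonneg hρ.le h0) (sub_nonneg.mpr hxy)
  have hpy : (0:ℝ) < 1 + ρ * an2 * y := by nlinarith
  have hprx : (0:ℝ) < 1 + ρ * x := by nlinarith
  have hden : (0:ℝ) < x * an2 + 1 / ρ := by positivity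
  have hkey : 1 + x * am2 / (x * an2 + 1 / ρ) = (1 + ρ * x) / (1 + ρ * an2 * x) := by
    rw [ham2]
    field_simp
    ring
  constructor
  · rw [hkey, Real.logb_div hprx.ne' hpx.ne',
      Real.logb_div hpy.ne' hpx.ne']
    ring
  · apply Real.logb_nonneg one_lt_two
    rw [le_div_iff₀ hpx]
    nlinarith
end

section
/- Fix real numbers 0 < x < y and a ∈ (0,1), and set a_m² = 1−a, a_n² = a. Then as ρ → ∞, the sum-rate gap log₂(1 + x·a_m²/(x·a_n² + 1/ρ)) + log₂(1 + ρ·a_n²·y) − (1/2)log₂(1 + ρx) − (1/2)log₂(1 + ρy) converges to (1/2)log₂(y/x) = log₂√y − log₂√x; in particular the limit does not depend on ρ or on the power coefficient a. -/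
open Filter

/-- For fixed channel gains `0 < x < y` and power coefficient
`a ∈ (0,1)` (with `a_m² = 1−a`, `a_n² = a`), the F-NOMA sum-rate gap over
orthogonal MA converges, as `ρ → ∞`, to `(1/2)log₂(y/x)`, independent of `a`. -/
theorem sum_rate_gap_limit (x y a : ℝ) (hx : 0 < x) (hxy : x < y)
    (ha : a ∈ Set.Ioo (0 : ℝ) 1) :
    Tendsto (fun ρ : ℝ =>
        Real.logb 2 (1 + x * (1 - a) / (x * a + 1 / ρ)) + Real.logb 2 (1 + ρ * a * y) -
          (1 / 2) * Real.logb 2 (1 + ρ * x) - (1 / 2) * Real.logb 2 (1 + ρ * y))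
      atTop (nhds ((1 / 2) * Real.logb 2 (y / x))) := by
  obtain ⟨ha0, ha1⟩ := ha
  have hy : 0 < y := hx.trans hxy
  have h0 : Tendsto (fun ρ : ℝ => 1 / ρ) atTop (nhds 0) := by
    simpa [one_div] using tendsto_inv_atTop_zero
  set L : ℝ → ℝ := fun ρ =>
    (1 + x * (1 - a) / (x * a + 1 / ρ)) ^ 2 *
      ((1 / ρ + a * y) ^ 2 / ((1 / ρ + x) * (1 / ρ + y))) with hL
  have hg : Tendsto L atTop (nhds (y / x)) := by
    have hA : Tendsto (fun ρ : ℝ => 1 + x * (1 - a) / (x * a + 1 / ρ)) atTop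
        (nhds (1 + x * (1 - a) / (x * a + 0))) :=
      tendsto_const_nhds.add (tendsto_const_nhds.div (tendsto_const_nhds.add h0)
        (by positivity))
    have hB : Tendsto (fun ρ : ℝ => (1 / ρ + a * y) ^ 2 / ((1 / ρ + x) * (1 / ρ + y))) atTop
        (nhds ((0 + a * y) ^ 2 / ((0 + x) * (0 + y)))) :=
      ((h0.add tendsto_const_nhds).pow 2).div
        ((h0.add tendsto_const_nhds).mul (h0.add tendsto_const_nhds)) (by positivity)
    have := (hA.pow 2).mul hB
    convert this using 2
    field_simp
    ring
  have hc : ContinuousAt (fun z : ℝ => Real.logb 2 z) (y / x) := by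
    have : ContinuousAt Real.log (y / x) := Real.continuousAt_log (by positivity)
    simpa [Real.logb] using this.div_const (Real.log 2)
  have hlog : Tendsto (fun ρ : ℝ => (1 / 2) * Real.logb 2 (L ρ)) atTop
      (nhds ((1 / 2) * Real.logb 2 (y / x))) :=
    (hc.tendsto.comp hg).const_mul (1 / 2)
  refine hlog.congr' ?_
  filter_upwards [eventually_gt_atTop (0 : ℝ)] with ρ hρ
  have hden : 0 < x * a + 1 / ρ := by positivity
  have hA0 : 0 < 1 + x * (1 - a) / (x * a + 1 / ρ) := by
    have : 0 ≤ x * (1 - a) / (x * a + 1 / ρ) :=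
      div_nonneg (mul_nonneg hx.le (by linarith)) hden.le
    linarith
  have hB0 : 0 < 1 + ρ * a * y := by positivity
  have hC0 : 0 < 1 + ρ * x := by positivity
  have hD0 : 0 < 1 + ρ * y := by positivity
  have hLρ : L ρ = (1 + x * (1 - a) / (x * a + 1 / ρ)) ^ 2 *
      (1 + ρ * a * y) ^ 2 / ((1 + ρ * x) * (1 + ρ * y)) := by
    rw [hL]
    have hρ' : ρ ≠ 0 := ne_of_gt hρ
    field_simp
  rw [hLρ, Real.logb_div (by positivity) (by positivity),
    Real.logb_mul (by positivity) (by positivity),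
    Real.logb_mul (by positivity) (by positivity),
    Real.logb_pow, Real.logb_pow]
  push_cast
  ring
end

section
/- Let M, n be integers with 1 ≤ n ≤ M, let c > 0, and set ϖ₃ = M!/((n−1)!(M−n)!). Define S(ρ) = ϖ₃ · Σ_{j=0}^{n−1} C(n−1, j)·(−1)^j·e^{−(M−n+j+1)c/ρ}/(M−n+j+1). Then lim_{ρ→∞} ρ^n·(1 − S(ρ)) = ϖ₃·c^n/n. In particular 1 − S(ρ) decays exactly like ρ^{−n} as ρ → ∞. -/
/-!
Write `n = q + 1`, `M = p + q + 1` and `y = exp (-c / ρ)`. Expanding `(1 - x) ^ q` binomially turns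
the sum into `∫₀ʸ xᵖ (1 - x)^q dx`, and `ϖ₃` is the reciprocal of the Beta integral
`∫₀¹ xᵖ (1 - x)^q dx = p! q! / (p + q + 1)!`, so `1 - S(ρ) = ϖ₃ ∫ᵧ¹ xᵖ (1 - x)^q dx`.
On `[y, 1]` the factor `xᵖ` lies between `yᵖ → 1` and `1`, which squeezes this integral between
multiples of `(1 - y)ⁿ / n`; finally `ρ (1 - y) → c`.
-/

open Filter intervalIntegral Topology
open scoped Nat

section BetaIntegrand

variable (p q : ℕ)

theorem integral_pow_mul_one_sub_pow_eq_sum (y : ℝ) :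
    ∫ x in (0 : ℝ)..y, x ^ p * (1 - x) ^ q =
      ∑ j ∈ Finset.range (q + 1), (q.choose j : ℝ) * (-1) ^ j * y ^ (p + j + 1) / (p + j + 1) := by
  have hexpand (x : ℝ) : x ^ p * (1 - x) ^ q =
      ∑ j ∈ Finset.range (q + 1), (q.choose j : ℝ) * (-1) ^ j * x ^ (p + j) := by
    rw [sub_eq_neg_add, add_pow, Finset.mul_sum]
    refine Finset.sum_congr rfl fun j _ => ?_
    rw [neg_pow]
    ring
  simp_rw [hexpand]
  rw [integral_finsetSum fun j _ => (intervalIntegrable_pow _).const_mul _]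
  refine Finset.sum_congr rfl fun j _ => ?_
  rw [integral_const_mul, integral_pow]
  push_cast
  ring

theorem integral_zero_one_pow_mul_one_sub_pow :
    ∫ x in (0 : ℝ)..1, x ^ p * (1 - x) ^ q = p ! * q ! / (p + q + 1)! := by
  have hbeta := Complex.Gamma_mul_Gamma_eq_betaIntegral (s := p + 1) (t := q + 1)
    (by simp; positivity) (by simp; positivity)
  rw [show (p + 1 : ℂ) + (q + 1) = ((p + q + 1 : ℕ) : ℂ) + 1 by push_cast; ring] at hbeta
  simp only [Complex.Gamma_nat_eq_factorial] at hbeta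
  have hB : Complex.betaIntegral (p + 1) (q + 1) =
      ((∫ x in (0 : ℝ)..1, x ^ p * (1 - x) ^ q : ℝ) : ℂ) := by
    rw [Complex.betaIntegral, ← integral_ofReal]
    refine integral_congr fun x _ => ?_
    simp [← Complex.cpow_natCast]
  rw [hB] at hbeta
  rw [eq_div_iff (by exact_mod_cast (Nat.factorial_pos _).ne'), mul_comm]
  exact_mod_cast hbeta.symm

theorem integral_one_sub_pow (y : ℝ) :
    ∫ x in y..1, (1 - x) ^ q = (1 - y) ^ (q + 1) / (q + 1) := by
  simp [integral_comp_sub_left (fun x : ℝ => x ^ q), integral_pow]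

variable {p q} {y : ℝ}

theorem integral_pow_mul_one_sub_pow_le (hy0 : 0 ≤ y) (hy1 : y ≤ 1) :
    ∫ x in y..1, x ^ p * (1 - x) ^ q ≤ (1 - y) ^ (q + 1) / (q + 1) := by
  rw [← integral_one_sub_pow]
  refine integral_mono_on hy1 ((by fun_prop : Continuous _).intervalIntegrable _ _)
    ((by fun_prop : Continuous _).intervalIntegrable _ _) fun x hx => ?_
  have h1x : 0 ≤ 1 - x := by linarith [hx.2]
  exact mul_le_of_le_one_left (pow_nonneg h1x q) (pow_le_one₀ (hy0.trans hx.1) hx.2)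

theorem pow_mul_le_integral_pow_mul_one_sub_pow (hy0 : 0 ≤ y) (hy1 : y ≤ 1) :
    y ^ p * ((1 - y) ^ (q + 1) / (q + 1)) ≤ ∫ x in y..1, x ^ p * (1 - x) ^ q := by
  rw [← integral_one_sub_pow, ← integral_const_mul]
  refine integral_mono_on hy1 ((by fun_prop : Continuous _).intervalIntegrable _ _)
    ((by fun_prop : Continuous _).intervalIntegrable _ _) fun x hx => ?_
  have h1x : 0 ≤ 1 - x := by linarith [hx.2]
  exact mul_le_mul_of_nonneg_right (pow_le_pow_left₀ hy0 hx.1 p) (pow_nonneg h1x q)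

end BetaIntegrand

theorem tendsto_mul_one_sub_exp_neg_div (c : ℝ) :
    Tendsto (fun ρ : ℝ => ρ * (1 - Real.exp (-c / ρ))) atTop (𝓝 c) := by
  rcases eq_or_ne c 0 with rfl | hc
  · simp
  have hslope := hasDerivAt_iff_tendsto_slope_zero.mp (Real.hasDerivAt_exp 0)
  have hz : Tendsto (fun ρ : ℝ => -c / ρ) atTop (𝓝[≠] 0) := by
    refine tendsto_nhdsWithin_of_tendsto_nhds_of_eventually_within _
      (tendsto_const_nhds.div_atTop tendsto_id) ?_
    filter_upwards [eventually_gt_atTop 0] with ρ hρ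
    exact div_ne_zero (neg_ne_zero.mpr hc) hρ.ne'
  have hlim := (hslope.comp hz).const_mul c
  rw [Real.exp_zero, mul_one] at hlim
  refine hlim.congr' ?_
  filter_upwards [eventually_gt_atTop 0] with ρ hρ
  simp only [Function.comp_apply, zero_add, smul_eq_mul]
  field_simp
  ring

theorem tendsto_pow_mul_integral_exp_neg_div (p q : ℕ) {c : ℝ} (hc : 0 ≤ c) :
    Tendsto (fun ρ : ℝ => ρ ^ (q + 1) * ∫ x in Real.exp (-c / ρ)..1, x ^ p * (1 - x) ^ q)
      atTop (𝓝 (c ^ (q + 1) / (q + 1))) := by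
  have hexp : Tendsto (fun ρ : ℝ => Real.exp (-c / ρ)) atTop (𝓝 1) := by
    simpa [Function.comp_def] using
      (Real.continuous_exp.tendsto 0).comp (tendsto_const_nhds.div_atTop tendsto_id)
  have hupper := (tendsto_mul_one_sub_exp_neg_div c).pow (q + 1) |>.div_const ((q : ℝ) + 1)
  have hlower := (hexp.pow p).mul hupper
  rw [one_pow, one_mul] at hlower
  have hy (ρ : ℝ) (hρ : 0 ≤ ρ) : 0 ≤ Real.exp (-c / ρ) ∧ Real.exp (-c / ρ) ≤ 1 :=
    ⟨(Real.exp_pos _).le,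
      Real.exp_le_one_iff.mpr (div_nonpos_of_nonpos_of_nonneg (neg_nonpos.mpr hc) hρ)⟩
  refine tendsto_of_tendsto_of_tendsto_of_le_of_le' hlower hupper ?_ ?_
  · filter_upwards [eventually_ge_atTop 0] with ρ hρ
    calc _ = ρ ^ (q + 1) *
          (Real.exp (-c / ρ) ^ p * ((1 - Real.exp (-c / ρ)) ^ (q + 1) / (q + 1))) := by
          rw [mul_pow]; ring
      _ ≤ _ := by gcongr; exact pow_mul_le_integral_pow_mul_one_sub_pow (hy ρ hρ).1 (hy ρ hρ).2
  · filter_upwards [eventually_ge_atTop 0] with ρ hρ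
    calc _ ≤ ρ ^ (q + 1) * ((1 - Real.exp (-c / ρ)) ^ (q + 1) / (q + 1)) := by
          gcongr; exact integral_pow_mul_one_sub_pow_le (hy ρ hρ).1 (hy ρ hρ).2
      _ = _ := by rw [mul_pow]; ring

/-- Let `1 ≤ n ≤ M`, `c > 0`, `ϖ₃ = M!/((n−1)!(M−n)!)` and
`S(ρ) = ϖ₃ Σ_{j=0}^{n−1} C(n−1,j)(−1)^j e^{−(M−n+j+1)c/ρ}/(M−n+j+1)`.
Then `ρ^n (1 − S(ρ)) → ϖ₃ c^n/n` as `ρ → ∞`, i.e. `1 − S(ρ)` decays like `ρ^{−n}`. -/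
theorem order_stat_tail_high_snr (M n : ℕ) (hn : 1 ≤ n) (hnM : n ≤ M) (c : ℝ) (hc : 0 < c) :
    Tendsto (fun ρ : ℝ =>
        ρ ^ n * (1 -
          ((M.factorial : ℝ) / (((n - 1).factorial : ℝ) * ((M - n).factorial : ℝ))) *
            ∑ j ∈ Finset.range n,
              ((n - 1).choose j : ℝ) * (-1) ^ j *
                Real.exp (-(((M : ℝ) - n + j + 1) * c) / ρ) / ((M : ℝ) - n + j + 1)))
      atTop
      (nhds (((M.factorial : ℝ) / (((n - 1).factorial : ℝ) * ((M - n).factorial : ℝ))) *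
        c ^ n / n)) := by
  obtain ⟨q, rfl⟩ : ∃ q, n = q + 1 := ⟨n - 1, by omega⟩
  obtain ⟨p, rfl⟩ : ∃ p, M = p + q + 1 := ⟨M - (q + 1), by omega⟩
  simp only [Nat.add_sub_cancel, show p + q + 1 - (q + 1) = p by omega]
  set ϖ : ℝ := (p + q + 1)! / (q ! * p !)
  have hϖ : ϖ * ∫ x in (0 : ℝ)..1, x ^ p * (1 - x) ^ q = 1 := by
    rw [integral_zero_one_pow_mul_one_sub_pow]
    simp only [ϖ]
    field_simp
  have htail (ρ : ℝ) : 1 - ϖ * ∑ j ∈ Finset.range (q + 1), (q.choose j : ℝ) * (-1) ^ j *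
        Real.exp (-((((p + q + 1 : ℕ) : ℝ) - (q + 1 : ℕ) + j + 1) * c) / ρ) /
          (((p + q + 1 : ℕ) : ℝ) - (q + 1 : ℕ) + j + 1) =
      ϖ * ∫ x in Real.exp (-c / ρ)..1, x ^ p * (1 - x) ^ q := by
    have hcont : Continuous fun x : ℝ => x ^ p * (1 - x) ^ q := by fun_prop
    rw [← integral_interval_sub_left (hcont.intervalIntegrable 0 1) (hcont.intervalIntegrable _ _),
      mul_sub, hϖ, integral_pow_mul_one_sub_pow_eq_sum]
    congr 2
    refine Finset.sum_congr rfl fun j _ => ?_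
    rw [← Real.exp_nat_mul]
    push_cast
    ring_nf
  simp_rw [htail]
  convert (tendsto_pow_mul_integral_exp_neg_div p q hc.le).const_mul ϖ using 1
  · ext ρ
    ring
  · congr 1
    push_cast
    ring
end

section
/- Let M, m be integers with 1 ≤ m ≤ M, let c > 0, and set ϖ₅ = M!/((m−1)!(M−m)!). Then lim_{ρ→∞} ρ^m · ϖ₅ · Σ_{i=0}^{m−1} C(m−1, i)·(−1)^i·(1 − e^{−c(M−m+i+1)/ρ})/(M−m+i+1) = ϖ₅·c^m/m. In particular the expression decays exactly like ρ^{−m} as ρ → ∞. -/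
/-!
With `b = M - m + 1` and `n = m - 1`, the sum is `F (c / ρ)` for
`F x = ∫₀ˣ e^{-bt} (1 - e^{-t})ⁿ dt`, expanded by the binomial theorem. The integrand behaves
like `tⁿ` near `0`, so `F x ~ x^{n+1} / (n + 1)` as `x → 0⁺` (L'Hôpital), and hence
`ρ^{n+1} F (c / ρ) → c^{n+1} / (n + 1)`.
-/

open Filter Real Topology Finset

/-- `∫₀ˣ e^{-bt} (1 - e^{-t})ⁿ dt` in closed form. -/
noncomputable def binomialExpIntegral (n : ℕ) (b x : ℝ) : ℝ :=
  ∑ i ∈ range (n + 1), (n.choose i : ℝ) * (-1) ^ i * (1 - exp (-((b + i) * x))) / (b + i)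

theorem binomialExpIntegral_zero (n : ℕ) (b : ℝ) : binomialExpIntegral n b 0 = 0 := by
  simp [binomialExpIntegral]

theorem exp_neg_mul_mul_one_sub_exp_neg_pow (n : ℕ) (b x : ℝ) :
    exp (-(b * x)) * (1 - exp (-x)) ^ n =
      ∑ i ∈ range (n + 1), (n.choose i : ℝ) * (-1) ^ i * exp (-((b + i) * x)) := by
  rw [sub_eq_neg_add, add_pow, mul_sum]
  refine sum_congr rfl fun i _ => ?_
  rw [neg_pow, ← exp_nat_mul, show -((b + i) * x) = -(b * x) + i * -x by ring, exp_add]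
  ring

theorem hasDerivAt_binomialExpIntegral (n : ℕ) {b : ℝ} (hb : 0 < b) (x : ℝ) :
    HasDerivAt (binomialExpIntegral n b) (exp (-(b * x)) * (1 - exp (-x)) ^ n) x := by
  rw [exp_neg_mul_mul_one_sub_exp_neg_pow]
  refine HasDerivAt.fun_sum fun i _ => ?_
  have hbi : b + i ≠ 0 := by positivity
  have hexp : HasDerivAt (fun x => exp (-((b + i) * x))) (exp (-((b + i) * x)) * -(b + i)) x :=
    (((hasDerivAt_id x).const_mul (b + i)).neg).exp.congr_deriv (by simp)
  convert ((hexp.const_sub 1).const_mul ((n.choose i : ℝ) * (-1) ^ i)).div_const (b + i) using 1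
  · rfl
  · field_simp

theorem tendsto_one_sub_exp_neg_div_nhdsGT :
    Tendsto (fun x => (1 - exp (-x)) / x) (𝓝[>] 0) (𝓝 1) := by
  have hderiv : HasDerivAt (fun x => -exp (-x)) 1 0 := by
    simpa using ((hasDerivAt_id (0 : ℝ)).neg.exp).fun_neg
  refine hderiv.tendsto_slope_zero_right.congr fun x => ?_
  simp only [zero_add, neg_zero, exp_zero, smul_eq_mul]
  ring

theorem tendsto_binomialExpIntegral_div_pow (n : ℕ) {b : ℝ} (hb : 0 < b) :
    Tendsto (fun x => binomialExpIntegral n b x / x ^ (n + 1)) (𝓝[>] 0)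
      (𝓝 (1 / (n + 1 : ℝ))) := by
  have hderiv_pow (x : ℝ) : HasDerivAt (fun x => x ^ (n + 1)) ((n + 1 : ℝ) * x ^ n) x := by
    simpa using hasDerivAt_pow (n + 1) x
  have hderiv_ne : ∀ᶠ x : ℝ in 𝓝[>] 0, (n + 1 : ℝ) * x ^ n ≠ 0 := by
    filter_upwards [self_mem_nhdsWithin] with x (hx : 0 < x)
    positivity
  have hnum : Tendsto (binomialExpIntegral n b) (𝓝[>] 0) (𝓝 0) := by
    simpa [binomialExpIntegral_zero] using
      (hasDerivAt_binomialExpIntegral n hb 0).continuousAt.tendsto.mono_left nhdsWithin_le_nhds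
  have hden : Tendsto (fun x : ℝ => x ^ (n + 1)) (𝓝[>] 0) (𝓝 0) := by
    simpa using ((continuous_pow (n + 1)).tendsto (0 : ℝ)).mono_left nhdsWithin_le_nhds
  have hexp : Tendsto (fun x => exp (-(b * x))) (𝓝[>] 0) (𝓝 1) := by
    simpa using ((by fun_prop : Continuous fun x => exp (-(b * x))).tendsto 0).mono_left
      nhdsWithin_le_nhds
  have hratio : Tendsto (fun x => exp (-(b * x)) * (1 - exp (-x)) ^ n / ((n + 1 : ℝ) * x ^ n))
      (𝓝[>] 0) (𝓝 (1 / (n + 1))) := by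
    have h := (hexp.mul (tendsto_one_sub_exp_neg_div_nhdsGT.pow n)).div_const (n + 1 : ℝ)
    rw [one_pow, one_mul] at h
    exact h.congr fun x => by rw [div_pow, ← mul_div_assoc, div_div, mul_comm (x ^ n)]
  exact HasDerivAt.lhopital_zero_nhdsGT (.of_forall (hasDerivAt_binomialExpIntegral n hb))
    (.of_forall hderiv_pow) hderiv_ne hnum hden hratio

theorem tendsto_pow_mul_binomialExpIntegral_div (n : ℕ) {b c : ℝ} (hb : 0 < b) (hc : 0 < c) :
    Tendsto (fun ρ => ρ ^ (n + 1) * binomialExpIntegral n b (c / ρ)) atTop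
      (𝓝 (c ^ (n + 1) / (n + 1))) := by
  have hcρ : Tendsto (fun ρ => c / ρ) atTop (𝓝[>] 0) :=
    tendsto_nhdsWithin_iff.2 ⟨tendsto_const_nhds.div_atTop tendsto_id,
      (eventually_gt_atTop 0).mono fun ρ hρ => div_pos hc hρ⟩
  have h := ((tendsto_binomialExpIntegral_div_pow n hb).comp hcρ).const_mul (c ^ (n + 1))
  rw [mul_one_div] at h
  refine h.congr' ?_
  filter_upwards [eventually_gt_atTop 0] with ρ hρ
  simp only [Function.comp_apply, div_pow]
  field_simp

/-- Let `1 ≤ m ≤ M`, `c > 0`, `ϖ₅ = M!/((m−1)!(M−m)!)`. Then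
`ρ^m · ϖ₅ Σ_{i=0}^{m−1} C(m−1,i)(−1)^i (1 − e^{−c(M−m+i+1)/ρ})/(M−m+i+1) → ϖ₅ c^m/m`
as `ρ → ∞`, i.e. the probability `P(R_m > R̄_m)` decays exactly like `ρ^{−m}`. -/
theorem weak_user_probability_high_snr (M m : ℕ) (hm : 1 ≤ m) (hmM : m ≤ M)
    (c : ℝ) (hc : 0 < c) :
    Tendsto (fun ρ : ℝ =>
        ρ ^ m * (((M.factorial : ℝ) / (((m - 1).factorial : ℝ) * ((M - m).factorial : ℝ))) *
          ∑ i ∈ Finset.range m,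
            ((m - 1).choose i : ℝ) * (-1) ^ i *
              (1 - Real.exp (-(c * ((M : ℝ) - m + i + 1)) / ρ)) / ((M : ℝ) - m + i + 1)))
      atTop
      (nhds (((M.factorial : ℝ) / (((m - 1).factorial : ℝ) * ((M - m).factorial : ℝ))) *
        c ^ m / m)) := by
  obtain ⟨n, rfl⟩ : ∃ n, m = n + 1 := ⟨m - 1, by omega⟩
  have hb : (0 : ℝ) < M - (n + 1 : ℕ) + 1 := by
    have : ((n + 1 : ℕ) : ℝ) ≤ M := by exact_mod_cast hmM
    linarith
  have h := (tendsto_pow_mul_binomialExpIntegral_div n hb hc).const_mul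
    ((M.factorial : ℝ) / ((n + 1 - 1).factorial * (M - (n + 1)).factorial))
  convert h using 2 with ρ
  · rw [mul_left_comm, binomialExpIntegral, Nat.add_sub_cancel]
    congr 2
    refine sum_congr rfl fun i _ => ?_
    rw [neg_div, mul_div_assoc', mul_comm c]
    ring_nf
  · push_cast
    ring
end

section
/- Let a > 0, b > 0, ε > 0 with b ≤ a·ε, and let x, y be real numbers with b < x < y. Then (x − b)·y < a·ε·x holds if and only if exactly one of the following three cases occurs: (i) y < a·ε; (ii) a·ε ≤ y < b + a·ε; (iii) y ≥ b + a·ε and x < b/(1 − a·ε/y). Moreover in cases (i) and (ii) the inequality (x−b)y < aεx holds for every x ∈ (b, y), while in case (iii) one has b/(1 − aε/y) ≤ y, so the constraint x < b/(1 − aε/y) is the binding one. -/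
/-- CR-NOMA outage-region classification. Let `a, b, ε > 0` with
`b ≤ a·ε`, and `b < x < y`. Then `(x − b)y < aεx` iff one of:
(i) `y < aε`; (ii) `aε ≤ y < b + aε`; (iii) `b + aε ≤ y` and `x < b/(1 − aε/y)`.
Moreover, if `y < b + aε` (cases (i)–(ii)) the inequality holds for every
`x' ∈ (b, y)`, while in case (iii) `b/(1 − aε/y) ≤ y`, so the constraint
`x < b/(1 − aε/y)` is the binding one. -/
theorem crnoma_outage_region (a b ε x y : ℝ) (ha : 0 < a) (hb : 0 < b) (hε : 0 < ε)
    (hbae : b ≤ a * ε) (hbx : b < x) (hxy : x < y) :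
    ((x - b) * y < a * ε * x ↔
      (y < a * ε ∨ (a * ε ≤ y ∧ y < b + a * ε) ∨
        (b + a * ε ≤ y ∧ x < b / (1 - a * ε / y)))) ∧
    (y < b + a * ε → ∀ x' ∈ Set.Ioo b y, (x' - b) * y < a * ε * x') ∧
    (b + a * ε ≤ y → b / (1 - a * ε / y) ≤ y) := by
  have hy0 : 0 < y := lt_trans hb (lt_trans hbx hxy)
  have hx0 : 0 < x := lt_trans hb hbx
  refine ⟨⟨fun h => ?_, fun h => ?_⟩, fun hlt x' hx' => ?_, fun h => ?_⟩
  · rcases lt_or_ge y (a*ε) with h1 | h1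
    · exact Or.inl h1
    rcases lt_or_ge y (b + a*ε) with h2 | h2
    · exact Or.inr (Or.inl ⟨h1, h2⟩)
    · refine Or.inr (Or.inr ⟨h2, ?_⟩)
      have hyae : 0 < y - a*ε := by linarith
      rw [show (1 - a*ε/y) = (y - a*ε)/y from by field_simp, div_div_eq_mul_div,
        lt_div_iff₀ hyae]
      nlinarith
  · rcases h with h1 | ⟨h1, h2⟩ | ⟨h1, h2⟩
    · nlinarith [mul_pos hx0 (show 0 < a*ε - y by linarith)]
    · nlinarith [mul_nonneg (show (0:ℝ) ≤ y - x by linarith) (show (0:ℝ) ≤ y - a*ε by linarith),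
        mul_pos hy0 (show 0 < b - (y - a*ε) by linarith)]
    · have hyae : 0 < y - a*ε := by linarith
      rw [show (1 - a*ε/y) = (y - a*ε)/y from by field_simp, div_div_eq_mul_div,
        lt_div_iff₀ hyae] at h2
      nlinarith
  · obtain ⟨hbx', hx'y⟩ := hx'
    rcases lt_or_ge y (a*ε) with h1 | h1
    · nlinarith [mul_pos (show (0:ℝ) < x' by linarith) (show 0 < a*ε - y by linarith)]
    · nlinarith [mul_nonneg (show (0:ℝ) ≤ y - x' by linarith) (show (0:ℝ) ≤ y - a*ε by linarith),
        mul_pos hy0 (show 0 < b - (y - a*ε) by linarith)]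
  · have hyae : 0 < y - a*ε := by linarith
    rw [show (1 - a*ε/y) = (y - a*ε)/y from by field_simp, div_div_eq_mul_div,
      div_le_iff₀ hyae]
    nlinarith
end

section
/- Let M, m, n be integers with 1 ≤ m < n ≤ M and let c > 0 (c plays the role of ϖ₂ = (1−2a_n²)/a_n⁴). Set ϖ₁ = M!/((m−1)!(n−1−m)!(M−n)!), ϖ₄ = √(1+c) − 1, f(x) = (1/ρ)e^{−x/ρ}, F(x) = 1 − e^{−x/ρ}, and define Q₁(ρ) = ϖ₁·Σ_{i=0}^{n−1−m} C(n−1−m, i)·((−1)^i/(m+i))·∫_{ϖ₄}^{c} f(y)·F(y)^{n−1−m−i}·(1−F(y))^{M−n}·[F(y)^{m+i} − F((c−y)/(1+y))^{m+i}] dy. Then lim_{ρ→∞} ρ^n·Q₁(ρ) = ϖ₁·ϖ, where ϖ = Σ_{i=0}^{n−1−m} C(n−1−m, i)·((−1)^i/(m+i))·∫_{ϖ₄}^{c} y^{n−1−m−i}·[y^{m+i} − ((c−y)/(1+y))^{m+i}] dy. -/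
/-!
Multiplied by `ρ^n`, the `i`-th integrand of `Q₁(ρ)` equals
`e^{-(M-n+1)y/ρ} (ρF(y))^{n-1-m-i} ((ρF(y))^{m+i} - (ρF(z))^{m+i})` with `z = (c-y)/(1+y)`.
Since `ρF(x) = ρ(1 - e^{-x/ρ})` tends to `x` from below, this tends to
`y^{n-1-m-i}(y^{m+i} - z^{m+i})` and, because `0 ≤ z ≤ y` on `[√(1+c) - 1, c]`, it is dominated
by `y^{n-1}`; dominated convergence on the bounded interval gives the limit term by term.
-/

open Filter

/-- The density `f(x) = (1/ρ)e^{−x/ρ}` of an exponential variable with mean `ρ`. -/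
noncomputable def expDens (ρ x : ℝ) : ℝ := (1 / ρ) * Real.exp (-x / ρ)

/-- The CDF `F(x) = 1 − e^{−x/ρ}` of an exponential variable with mean `ρ`. -/
noncomputable def expCDF (ρ x : ℝ) : ℝ := 1 - Real.exp (-x / ρ)

/-- `ϖ₁ = M!/((m−1)!(n−1−m)!(M−n)!)`. -/
noncomputable def w1 (M m n : ℕ) : ℝ :=
  (M.factorial : ℝ) /
    (((m - 1).factorial : ℝ) * ((n - 1 - m).factorial : ℝ) * ((M - n).factorial : ℝ))

open Set Topology

section expCDF

variable {ρ : ℝ}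

lemma one_sub_expCDF (x : ℝ) : 1 - expCDF ρ x = Real.exp (-x / ρ) := by
  simp [expCDF]

lemma monotone_expCDF (hρ : 0 ≤ ρ) : Monotone (expCDF ρ) := fun x y hxy => by
  have : -y / ρ ≤ -x / ρ := by gcongr
  simp only [expCDF]
  linarith [Real.exp_le_exp.mpr this]

lemma expCDF_nonneg (hρ : 0 ≤ ρ) {x : ℝ} (hx : 0 ≤ x) : 0 ≤ expCDF ρ x := by
  simpa [expCDF] using monotone_expCDF hρ hx

lemma mul_expCDF_le (hρ : 0 < ρ) (x : ℝ) : ρ * expCDF ρ x ≤ x := by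
  have h : expCDF ρ x ≤ x / ρ := by
    rw [expCDF]
    linarith [Real.add_one_le_exp (-x / ρ), neg_div ρ x]
  calc ρ * expCDF ρ x ≤ ρ * (x / ρ) := by gcongr
    _ = x := by field_simp

/-- The slope of `u ↦ 1 - e^{-xu}` at `0`, taken along `u = ρ⁻¹`. -/
lemma tendsto_mul_expCDF (x : ℝ) : Tendsto (fun ρ => ρ * expCDF ρ x) atTop (𝓝 x) := by
  have hderiv : HasDerivAt (fun u => 1 - Real.exp (-(x * u))) x 0 := by
    simpa using (((hasDerivAt_id (0 : ℝ)).const_mul x).fun_neg.exp).const_sub 1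
  have hinv : Tendsto (fun ρ : ℝ => ρ⁻¹) atTop (𝓝[≠] 0) :=
    tendsto_inv_atTop_nhdsGT_zero.mono_right (nhdsWithin_mono _ fun _ hu => ne_of_gt hu)
  refine ((hasDerivAt_iff_tendsto_slope.mp hderiv).comp hinv).congr' ?_
  filter_upwards [eventually_ne_atTop 0] with ρ hρ
  simp only [Function.comp_apply, slope_def_field, mul_zero, neg_zero, Real.exp_zero, sub_self,
    sub_zero, div_eq_mul_inv, inv_inv, expCDF, neg_mul]
  ring

lemma tendsto_exp_neg_div_atTop (x : ℝ) :
    Tendsto (fun ρ => Real.exp (-x / ρ)) atTop (𝓝 1) := by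
  simpa [Function.comp_def] using
    (Real.continuous_exp.tendsto 0).comp (tendsto_const_nhds.div_atTop tendsto_id)

end expCDF

/-- The integrand of `Q₁(ρ)`, with `p = n-1-m-i`, `q = m+i`, `k = M-n`, `z = (c-y)/(1+y)`. -/
noncomputable def q1Integrand (ρ : ℝ) (p q k : ℕ) (y z : ℝ) : ℝ :=
  expDens ρ y * expCDF ρ y ^ p * (1 - expCDF ρ y) ^ k * (expCDF ρ y ^ q - expCDF ρ z ^ q)

section q1Integrand

variable {ρ : ℝ} (p q k : ℕ) {y z : ℝ}

lemma pow_mul_q1Integrand (hρ : ρ ≠ 0) :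
    ρ ^ (1 + p + q) * q1Integrand ρ p q k y z =
      Real.exp (-y / ρ) ^ (k + 1) * (ρ * expCDF ρ y) ^ p *
        ((ρ * expCDF ρ y) ^ q - (ρ * expCDF ρ z) ^ q) := by
  simp only [q1Integrand, one_sub_expCDF, expDens, mul_pow, pow_add]
  field_simp

lemma tendsto_pow_mul_q1Integrand (y z : ℝ) :
    Tendsto (fun ρ => ρ ^ (1 + p + q) * q1Integrand ρ p q k y z) atTop
      (𝓝 (y ^ p * (y ^ q - z ^ q))) := by
  have hlim := ((tendsto_exp_neg_div_atTop y).pow (k + 1)).mul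
    (((tendsto_mul_expCDF y).pow p).mul
      (((tendsto_mul_expCDF y).pow q).sub ((tendsto_mul_expCDF z).pow q)))
  rw [one_pow, one_mul] at hlim
  refine hlim.congr' ?_
  filter_upwards [eventually_ne_atTop 0] with ρ hρ
  rw [pow_mul_q1Integrand p q k hρ, mul_assoc]

lemma abs_pow_mul_q1Integrand_le (hρ : 0 < ρ) (hz : 0 ≤ z) (hzy : z ≤ y) :
    |ρ ^ (1 + p + q) * q1Integrand ρ p q k y z| ≤ y ^ (p + q) := by
  rw [pow_mul_q1Integrand p q k hρ.ne']
  set u := ρ * expCDF ρ y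
  set v := ρ * expCDF ρ z
  set e := Real.exp (-y / ρ)
  have hv : 0 ≤ v := mul_nonneg hρ.le (expCDF_nonneg hρ.le hz)
  have hvu : v ≤ u := mul_le_mul_of_nonneg_left (monotone_expCDF hρ.le hzy) hρ.le
  have hu : 0 ≤ u := hv.trans hvu
  have huy : u ≤ y := mul_expCDF_le hρ y
  have he1 : e ^ (k + 1) ≤ 1 :=
    pow_le_one₀ (Real.exp_pos _).le (Real.exp_le_one_iff.mpr (by
      rw [neg_div]; exact neg_nonpos.mpr (div_nonneg (hz.trans hzy) hρ.le)))
  have hdiff : 0 ≤ u ^ q - v ^ q := sub_nonneg.mpr (pow_le_pow_left₀ hv hvu q)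
  rw [abs_of_nonneg (mul_nonneg (by positivity) hdiff)]
  calc e ^ (k + 1) * u ^ p * (u ^ q - v ^ q) ≤ 1 * u ^ p * u ^ q := by
        gcongr
        exact sub_le_self _ (pow_nonneg hv q)
    _ = u ^ (p + q) := by rw [one_mul, pow_add]
    _ ≤ y ^ (p + q) := pow_le_pow_left₀ hu huy _

lemma tendsto_integral_pow_mul_q1Integrand {a b : ℝ} {g : ℝ → ℝ}
    (hg : ContinuousOn g (uIcc a b)) (hg_nonneg : ∀ y ∈ uIcc a b, 0 ≤ g y)
    (hg_le : ∀ y ∈ uIcc a b, g y ≤ y) :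
    Tendsto (fun ρ => ∫ y in a..b, ρ ^ (1 + p + q) * q1Integrand ρ p q k y (g y)) atTop
      (𝓝 (∫ y in a..b, y ^ p * (y ^ q - g y ^ q))) := by
  refine intervalIntegral.tendsto_integral_filter_of_dominated_convergence
    (fun y => y ^ (p + q)) ?_ ?_ ((continuous_pow _).intervalIntegrable _ _) ?_
  · refine .of_forall fun ρ => (ContinuousOn.aestronglyMeasurable ?_ measurableSet_uIoc)
    have hF : Continuous (expCDF ρ) := by unfold expCDF; fun_prop
    have hD : Continuous (expDens ρ) := by unfold expDens; fun_prop
    unfold q1Integrand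
    exact (continuousOn_const.mul ((((hD.mul (hF.pow p)).mul ((continuous_const.sub hF).pow k)
      ).continuousOn).mul ((hF.pow q).continuousOn.sub
        ((hF.pow q).comp_continuousOn hg)))).mono uIoc_subset_uIcc
  · filter_upwards [eventually_gt_atTop 0] with ρ hρ
    refine .of_forall fun y hy => ?_
    exact abs_pow_mul_q1Integrand_le p q k hρ (hg_nonneg y (uIoc_subset_uIcc hy))
      (hg_le y (uIoc_subset_uIcc hy))
  · exact .of_forall fun y _ => tendsto_pow_mul_q1Integrand p q k y (g y)

end q1Integrand

section threshold

variable {c : ℝ}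

/-- `ϖ₄ = √(1+c) - 1` is the point where `(c - y)/(1 + y) = y`. -/
lemma div_one_add_mem_Icc (hc : 0 < c) {y : ℝ} (hy : y ∈ Icc (Real.sqrt (1 + c) - 1) c) :
    (c - y) / (1 + y) ∈ Icc 0 y := by
  have hs : Real.sqrt (1 + c) ^ 2 = 1 + c := Real.sq_sqrt (by linarith)
  have hs1 : 1 < Real.sqrt (1 + c) := (Real.lt_sqrt zero_le_one).mpr (by linarith)
  have hy1 : 0 < 1 + y := by linarith [hy.1]
  refine ⟨div_nonneg (by linarith [hy.2]) hy1.le, (div_le_iff₀ hy1).mpr ?_⟩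
  nlinarith [hy.1]

lemma sqrt_one_add_sub_one_le (hc : 0 ≤ c) : Real.sqrt (1 + c) - 1 ≤ c := by
  have := Real.sqrt_le_sqrt (show 1 + c ≤ (1 + c) ^ 2 by nlinarith)
  rw [Real.sqrt_sq (by linarith)] at this
  linarith

end threshold

theorem q1_high_snr_general (M m n : ℕ)
    (c : ℝ) (hc : 0 < c) :
    Tendsto (fun ρ : ℝ =>
        ρ ^ n * (w1 M m n *
          ∑ i ∈ Finset.range (n - m),
            ((n - 1 - m).choose i : ℝ) * ((-1) ^ i / ((m : ℝ) + i)) *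
              ∫ y in (Real.sqrt (1 + c) - 1)..c,
                expDens ρ y * (expCDF ρ y) ^ (n - 1 - m - i) *
                  (1 - expCDF ρ y) ^ (M - n) *
                  ((expCDF ρ y) ^ (m + i) - (expCDF ρ ((c - y) / (1 + y))) ^ (m + i))))
      atTop
      (nhds (w1 M m n *
        ∑ i ∈ Finset.range (n - m),
          ((n - 1 - m).choose i : ℝ) * ((-1) ^ i / ((m : ℝ) + i)) *
            ∫ y in (Real.sqrt (1 + c) - 1)..c,
              y ^ (n - 1 - m - i) * (y ^ (m + i) - ((c - y) / (1 + y)) ^ (m + i)))) := by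
  set a := Real.sqrt (1 + c) - 1
  have hI : uIcc a c = Icc a c := uIcc_of_le (sqrt_one_add_sub_one_le hc.le)
  have hz : ∀ y ∈ uIcc a c, (c - y) / (1 + y) ∈ Icc 0 y := fun y hy =>
    div_one_add_mem_Icc hc (hI ▸ hy)
  have hg : ContinuousOn (fun y => (c - y) / (1 + y)) (uIcc a c) :=
    (continuousOn_const.sub continuousOn_id).div (continuousOn_const.add continuousOn_id)
      fun y hy => by linarith [(hz y hy).1.trans (hz y hy).2]
  have hterm : ∀ i ∈ Finset.range (n - m), Tendsto (fun ρ => ρ ^ n *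
      ∫ y in a..c, q1Integrand ρ (n - 1 - m - i) (m + i) (M - n) y ((c - y) / (1 + y))) atTop
      (𝓝 (∫ y in a..c, y ^ (n - 1 - m - i) * (y ^ (m + i) - ((c - y) / (1 + y)) ^ (m + i)))) := by
    intro i hi
    have hn : 1 + (n - 1 - m - i) + (m + i) = n := by
      have := Finset.mem_range.mp hi
      omega
    simpa only [hn, intervalIntegral.integral_const_mul] using
      tendsto_integral_pow_mul_q1Integrand (n - 1 - m - i) (m + i) (M - n) hg
        (fun y hy => (hz y hy).1) (fun y hy => (hz y hy).2)
  refine (tendsto_const_nhds.mul (tendsto_finsetSum _ fun i hi =>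
    tendsto_const_nhds.mul (hterm i hi))).congr fun ρ => ?_
  simp only [Finset.mul_sum, q1Integrand]
  exact Finset.sum_congr rfl fun i _ => by ring

/-- High-SNR behavior of the double-integral term `Q₁(ρ)` of
Theorem 1: with `1 ≤ m < n ≤ M`, `c > 0`, `ϖ₄ = √(1+c) − 1`,
`Q₁(ρ) = ϖ₁ Σ_{i=0}^{n−1−m} C(n−1−m,i)((−1)^i/(m+i)) ∫_{ϖ₄}^{c}
  f(y)F(y)^{n−1−m−i}(1−F(y))^{M−n}(F(y)^{m+i} − F((c−y)/(1+y))^{m+i}) dy`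
satisfies `ρ^n Q₁(ρ) → ϖ₁·ϖ` as `ρ → ∞`, where
`ϖ = Σ_{i=0}^{n−1−m} C(n−1−m,i)((−1)^i/(m+i)) ∫_{ϖ₄}^{c}
  y^{n−1−m−i}(y^{m+i} − ((c−y)/(1+y))^{m+i}) dy`. -/
theorem q1_high_snr (M m n : ℕ) (hm : 1 ≤ m) (hmn : m < n) (hnM : n ≤ M)
    (c : ℝ) (hc : 0 < c) :
    Tendsto (fun ρ : ℝ =>
        ρ ^ n * (w1 M m n *
          ∑ i ∈ Finset.range (n - m),
            ((n - 1 - m).choose i : ℝ) * ((-1) ^ i / ((m : ℝ) + i)) *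
              ∫ y in (Real.sqrt (1 + c) - 1)..c,
                expDens ρ y * (expCDF ρ y) ^ (n - 1 - m - i) *
                  (1 - expCDF ρ y) ^ (M - n) *
                  ((expCDF ρ y) ^ (m + i) - (expCDF ρ ((c - y) / (1 + y))) ^ (m + i))))
      atTop
      (nhds (w1 M m n *
        ∑ i ∈ Finset.range (n - m),
          ((n - 1 - m).choose i : ℝ) * ((-1) ^ i / ((m : ℝ) + i)) *
            ∫ y in (Real.sqrt (1 + c) - 1)..c,
              y ^ (n - 1 - m - i) * (y ^ (m + i) - ((c - y) / (1 + y)) ^ (m + i)))) :=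
  q1_high_snr_general M m n c hc
end

section
/- Let M, m, n be integers with 1 ≤ m < n ≤ M, let a_n² ∈ (0, 1/2] with a_m² = 1 − a_n², let R > 0, and let G₁,…,G_M be i.i.d. exponential(1) channel gains with order statistics G_(1) ≤ ⋯ ≤ G_(M); write X = G_(m), Y = G_(n), and define the rates R_m = log₂(1 + X a_m²/(X a_n² + 1/ρ)), R_n = log₂(1 + ρ a_n² Y), R̄_m = (1/2)log₂(1 + ρX), R̄_n = (1/2)log₂(1 + ρY). Then lim_{ρ→∞} P(R_m + R_n − R̄_m − R̄_n < R) = P(Y < 2^{2R}·X); in particular, for R > 0 the probability that the F-NOMA sum-rate gain over orthogonal MA is below R does not vanish as ρ → ∞ but converges to a strictly positive constant depending only on M, m, n, R. -/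
/-!
As `ρ → ∞` the sum-rate gap converges pointwise to `½ log₂ (Y / X)`, and
`½ log₂ (Y / X) < R ↔ Y < 2^{2R} X`. The gains are independent with atomless laws, so almost
surely `Y ≠ 2^{2R} X`; off that null set the indicator of `{gap < R}` is eventually that of
`{Y < 2^{2R} X}`, and dominated convergence gives the limit. The limit is positive because with
positive probability every gain lies in `(1, 2^{2R}]`, and then `Y ≤ 2^{2R} < 2^{2R} X`.
-/

open MeasureTheory ProbabilityTheory Filter

/-- The `k`-th smallest entry (1-indexed) of a finite tuple of reals. -/
noncomputable def orderStat {M : ℕ} (g : Fin M → ℝ) (k : ℕ) : ℝ :=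
  ((List.ofFn g).insertionSort (· ≤ ·)).getD (k - 1) 0

open Finset

section OrderStatistics

variable {M : ℕ} (g : Fin M → ℝ) {k : ℕ}

theorem orderStat_eq_apply_sort (hk : k - 1 < M) :
    orderStat g k = g (Tuple.sort g ⟨k - 1, hk⟩) := by
  have hsorted : (List.ofFn g).insertionSort (· ≤ ·) = List.ofFn (g ∘ Tuple.sort g) :=
    ((List.perm_insertionSort _ _).trans ((Tuple.sort g).ofFn_comp_perm g).symm).eq_of_pairwise'
      (List.pairwise_insertionSort _ _) (Tuple.monotone_sort g).sortedLE_ofFn.pairwise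
  rw [orderStat, hsorted, List.getD_eq_getElem _ _ (by simpa using hk), List.getElem_ofFn]
  rfl

theorem orderStat_mem_of_forall_mem {s : Set ℝ} (hs : ∀ i, g i ∈ s) (hk : k - 1 < M) :
    orderStat g k ∈ s := by
  rw [orderStat_eq_apply_sort g hk]
  exact hs _

theorem orderStat_ne_mul_orderStat {c : ℝ} (hg : ∀ i j, g i ≠ c * g j) {j : ℕ}
    (hk : k - 1 < M) (hj : j - 1 < M) : orderStat g k ≠ c * orderStat g j := by
  rw [orderStat_eq_apply_sort g hk, orderStat_eq_apply_sort g hj]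
  exact hg _ _

theorem orderStat_lt_mul_orderStat {c : ℝ} (hg : ∀ i, g i ∈ Set.Ioc 1 c) {j : ℕ}
    (hk : k - 1 < M) (hj : j - 1 < M) : orderStat g k < c * orderStat g j := by
  have hj_mem := orderStat_mem_of_forall_mem g hg hj
  exact (orderStat_mem_of_forall_mem g hg hk).2.trans_lt
    (lt_mul_of_one_lt_right (by linarith [hj_mem.1, hj_mem.2]) hj_mem.1)

theorem orderStat_le_iff (hk : k - 1 < M) (t : ℝ) :
    orderStat g k ≤ t ↔ k - 1 < #{i | g i ≤ t} := by
  have hcard : #{i | (g ∘ Tuple.sort g) i ≤ t} = #{i | g i ≤ t} :=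
    card_equiv (Tuple.sort g) fun i => by simp
  rw [orderStat_eq_apply_sort g hk, ← hcard]
  exact (Tuple.lt_card_le_iff_apply_le_of_monotone (Tuple.monotone_sort g)).symm

theorem measurable_orderStat (hk : k - 1 < M) : Measurable fun g : Fin M → ℝ => orderStat g k := by
  refine measurable_of_Iic fun t => ?_
  have hcount : Measurable fun g : Fin M → ℝ => #{i | g i ≤ t} := by
    simp_rw [card_filter]
    exact Finset.measurable_sum _ fun i _ =>
      Measurable.ite (measurableSet_le (measurable_pi_apply i) measurable_const)
        measurable_const measurable_const
  have hpre : (fun g : Fin M → ℝ => orderStat g k) ⁻¹' Set.Iic t =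
      (fun g : Fin M → ℝ => #{i | g i ≤ t}) ⁻¹' Set.Ioi (k - 1) := by
    ext g
    exact orderStat_le_iff g hk t
  rw [hpre]
  exact hcount measurableSet_Ioi

end OrderStatistics

section ExponentialLaw

variable {r : ℝ}

instance : NullSingletonClass (expMeasure r) :=
  inferInstanceAs (NullSingletonClass (volume.withDensity _))

theorem ae_pos_expMeasure (hr : 0 < r) : ∀ᵐ x ∂expMeasure r, 0 < x := by
  have := isProbabilityMeasure_expMeasure hr
  have h : expMeasure r (Set.Iic 0) = 0 := by
    rw [← ofReal_cdf, cdf_expMeasure_eq hr]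
    simp
  filter_upwards [measure_eq_zero_iff_ae_notMem.1 h] with x hx
  simpa using hx

theorem expMeasure_Ioc_pos (hr : 0 < r) {a b : ℝ} (ha : 0 ≤ a) (hab : a < b) :
    0 < expMeasure r (Set.Ioc a b) := by
  have := isProbabilityMeasure_expMeasure hr
  rw [← measure_cdf (expMeasure r), StieltjesFunction.measure_Ioc, cdf_expMeasure_eq hr,
    cdf_expMeasure_eq hr, if_pos ha, if_pos (ha.trans hab.le)]
  simpa using Real.exp_lt_exp.2 (by nlinarith)

end ExponentialLaw

section Independence

variable {Ω β ι : Type*} [MeasurableSpace Ω] [MeasurableSpace β] {μ : Measure Ω}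

theorem ProbabilityTheory.IndepFun.measure_eq_comp_eq_zero [IsFiniteMeasure μ] {f : Ω → β}
    {g : Ω → ℝ} (hf : Measurable f) (hg : Measurable g) (hfg : IndepFun f g μ)
    (hg_atom : ∀ y, μ.map g {y} = 0) {φ : β → ℝ} (hφ : Measurable φ) :
    μ {ω | g ω = φ (f ω)} = 0 := by
  have hs : MeasurableSet {p : β × ℝ | p.2 = φ p.1} :=
    measurableSet_eq_fun measurable_snd (hφ.comp measurable_fst)
  calc μ {ω | g ω = φ (f ω)} = μ.map (fun ω => (f ω, g ω)) {p | p.2 = φ p.1} :=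
        (Measure.map_apply (hf.prodMk hg) hs).symm
    _ = (μ.map f).prod (μ.map g) {p | p.2 = φ p.1} := by
        rw [(indepFun_iff_map_prod_eq_prod_map_map hf.aemeasurable hg.aemeasurable).1 hfg]
    _ = 0 := by
        rw [Measure.prod_apply hs]
        simp [Set.preimage, hg_atom]

theorem ProbabilityTheory.iIndepFun.ae_apply_ne_const_mul_apply [Countable ι] {G : ι → Ω → ℝ}
    (hG : ∀ i, Measurable (G i)) (hindep : iIndepFun G μ) (hG_atom : ∀ i y, μ.map (G i) {y} = 0)
    (hG_ne : ∀ᵐ ω ∂μ, ∀ i, G i ω ≠ 0) {c : ℝ} (hc : c ≠ 1) :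
    ∀ᵐ ω ∂μ, ∀ i j, G i ω ≠ c * G j ω := by
  have := hindep.isProbabilityMeasure
  refine ae_all_iff.2 fun i => ae_all_iff.2 fun j => ?_
  by_cases hij : i = j
  · filter_upwards [hG_ne] with ω hω
    subst hij
    intro h
    exact hc (mul_right_cancel₀ (hω i) (by rw [one_mul, ← h]))
  · exact measure_eq_zero_iff_ae_notMem.1 <|
      (hindep.indepFun (Ne.symm hij)).measure_eq_comp_eq_zero (hG j) (hG i) (hG_atom i)
        (measurable_const_mul c)

theorem ProbabilityTheory.iIndepFun.measure_iInter_preimage_ne_zero [Fintype ι] {G : ι → Ω → β}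
    (hG : ∀ i, Measurable (G i)) (hindep : iIndepFun G μ) {s : Set β} (hs : MeasurableSet s)
    (hs_pos : ∀ i, μ.map (G i) s ≠ 0) : μ (⋂ i, G i ⁻¹' s) ≠ 0 := by
  rw [hindep.meas_iInter fun i => ⟨s, hs, rfl⟩, prod_ne_zero_iff]
  exact fun i _ => by simpa [Measure.map_apply (hG i) hs] using hs_pos i

end Independence

section SumRateGap

open Real

/-- `R_m + R_n − R̄_m − R̄_n` for the gains `X = G_(m)`, `Y = G_(n)`, power coefficient
`a = a_n²` and transmit SNR `ρ`. -/
noncomputable def sumRateGap (a X Y ρ : ℝ) : ℝ :=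
  logb 2 (1 + X * (1 - a) / (X * a + 1 / ρ)) + logb 2 (1 + ρ * a * Y) -
    (1 / 2) * logb 2 (1 + ρ * X) - (1 / 2) * logb 2 (1 + ρ * Y)

@[fun_prop]
theorem Real.measurable_logb (b : ℝ) : Measurable (logb b) :=
  measurable_log.div_const _

theorem Real.logb_one_add_mul {b ρ x : ℝ} (hρ : 0 < ρ) (hx : 0 < x) :
    logb b (1 + ρ * x) = logb b ρ + logb b (ρ⁻¹ + x) := by
  rw [← logb_mul hρ.ne' (by positivity), mul_add, mul_inv_cancel₀ hρ.ne']

variable {a X Y : ℝ}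

theorem tendsto_sumRateGap (ha : 0 < a) (hX : 0 < X) (hY : 0 < Y) :
    Tendsto (sumRateGap a X Y) atTop (nhds ((1 / 2) * logb 2 (Y / X))) := by
  -- the three `logb 2 ρ` terms cancel, leaving a function of `1/ρ` continuous at `0`
  let F : ℝ → ℝ := fun t => logb 2 (1 + X * (1 - a) / (X * a + t)) + logb 2 (t + a * Y) -
    (1 / 2) * logb 2 (t + X) - (1 / 2) * logb 2 (t + Y)
  have hlim0 : 1 + X * (1 - a) / (X * a + 0) = a⁻¹ := by
    rw [add_zero, mul_div_mul_left _ _ hX.ne']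
    field_simp
    ring
  have hF : ContinuousAt F 0 := by
    have hXa : X * a + 0 ≠ 0 := by positivity
    have h1 : 1 + X * (1 - a) / (X * a + 0) ≠ 0 := by rw [hlim0]; positivity
    fun_prop (disch := first | assumption | positivity)
  have hF0 : F 0 = (1 / 2) * logb 2 (Y / X) := by
    simp only [F, hlim0, zero_add, logb_inv, logb_mul ha.ne' hY.ne', logb_div hY.ne' hX.ne']
    ring
  have hgap : ∀ᶠ ρ in atTop, F ρ⁻¹ = sumRateGap a X Y ρ := by
    filter_upwards [eventually_gt_atTop 0] with ρ hρ
    simp only [F, sumRateGap, one_div ρ, mul_assoc ρ a Y, logb_one_add_mul hρ hX,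
      logb_one_add_mul hρ hY, logb_one_add_mul hρ (mul_pos ha hY)]
    ring
  rw [← hF0]
  exact (hF.tendsto.comp tendsto_inv_atTop_zero).congr' hgap

theorem eventually_sumRateGap_lt_iff (ha : 0 < a) (hX : 0 < X) (hY : 0 < Y) {R : ℝ}
    (hne : Y ≠ 2 ^ (2 * R) * X) :
    ∀ᶠ ρ in atTop, (sumRateGap a X Y ρ < R ↔ Y < 2 ^ (2 * R) * X) := by
  have hlim := tendsto_sumRateGap ha hX hY
  rcases hne.lt_or_gt with hlt | hgt
  · have hL : (1 / 2) * logb 2 (Y / X) < R := by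
      rw [← lt_div_iff₀' one_half_pos, logb_lt_iff_lt_rpow one_lt_two (div_pos hY hX),
        div_lt_iff₀ hX]
      convert hlt using 3
      ring
    filter_upwards [hlim.eventually_lt_const hL] with ρ hρ
    exact iff_of_true hρ hlt
  · have hL : R < (1 / 2) * logb 2 (Y / X) := by
      rw [← div_lt_iff₀' one_half_pos, lt_logb_iff_rpow_lt one_lt_two (div_pos hY hX),
        lt_div_iff₀ hX]
      convert hgt using 3
      ring
    filter_upwards [hlim.eventually_const_lt hL] with ρ hρ
    exact iff_of_false hρ.not_gt hgt.not_gt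

end SumRateGap

theorem fnoma_sum_rate_gap_limit_general {Ω : Type*} [MeasureSpace Ω]
    [IsProbabilityMeasure (ℙ : Measure Ω)]
    (M m n : ℕ) (hmn : m < n) (hnM : n ≤ M)
    (an2 : ℝ) (han2 : an2 ∈ Set.Ioc (0 : ℝ) (1 / 2)) (R : ℝ) (hR : 0 < R)
    (G : Fin M → Ω → ℝ) (hGmeas : ∀ i, Measurable (G i))
    (hindep : iIndepFun G ℙ)
    (hdist : ∀ i, Measure.map (G i) ℙ = expMeasure 1) :
    Tendsto (fun ρ : ℝ =>
        (ℙ {ω |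
          Real.logb 2 (1 + orderStat (fun i => G i ω) m * (1 - an2) /
              (orderStat (fun i => G i ω) m * an2 + 1 / ρ)) +
            Real.logb 2 (1 + ρ * an2 * orderStat (fun i => G i ω) n) -
            (1 / 2) * Real.logb 2 (1 + ρ * orderStat (fun i => G i ω) m) -
            (1 / 2) * Real.logb 2 (1 + ρ * orderStat (fun i => G i ω) n) < R}).toReal)
      atTop
      (nhds ((ℙ {ω | orderStat (fun i => G i ω) n <
        (2 : ℝ) ^ (2 * R) * orderStat (fun i => G i ω) m}).toReal)) ∧
    0 < (ℙ {ω | orderStat (fun i => G i ω) n <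
      (2 : ℝ) ^ (2 * R) * orderStat (fun i => G i ω) m}).toReal := by
  have hm : m - 1 < M := by omega
  have hn : n - 1 < M := by omega
  have hc : 1 < (2 : ℝ) ^ (2 * R) := Real.one_lt_rpow one_lt_two (by positivity)
  have hX : Measurable fun ω => orderStat (fun i => G i ω) m :=
    (measurable_orderStat hm).comp (measurable_pi_lambda _ hGmeas)
  have hY : Measurable fun ω => orderStat (fun i => G i ω) n :=
    (measurable_orderStat hn).comp (measurable_pi_lambda _ hGmeas)
  have hpos : ∀ᵐ ω ∂ℙ, ∀ i, 0 < G i ω := ae_all_iff.2 fun i =>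
    ae_of_ae_map (hGmeas i).aemeasurable (by rw [hdist i]; exact ae_pos_expMeasure one_pos)
  have hne := hindep.ae_apply_ne_const_mul_apply hGmeas (fun i y => by simp [hdist i])
    (hpos.mono fun ω h i => (h i).ne') hc.ne'
  have hbox : ℙ (⋂ i, G i ⁻¹' Set.Ioc 1 ((2 : ℝ) ^ (2 * R))) ≠ 0 :=
    hindep.measure_iInter_preimage_ne_zero hGmeas measurableSet_Ioc fun i => by
      rw [hdist i]
      exact (expMeasure_Ioc_pos one_pos zero_le_one hc).ne'
  refine ⟨(ENNReal.tendsto_toReal (measure_ne_top _ _)).comp ?_,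
    ENNReal.toReal_pos (fun h0 => hbox (measure_mono_null (fun ω hω => ?_) h0))
      (measure_ne_top _ _)⟩
  · refine tendsto_measure_of_ae_tendsto_indicator_of_isFiniteMeasure atTop
      (measurableSet_lt hY (hX.const_mul _))
      (fun ρ => measurableSet_lt (by fun_prop) measurable_const) ?_
    filter_upwards [hpos, hne] with ω hpos hne
    exact eventually_sumRateGap_lt_iff han2.1
      (orderStat_mem_of_forall_mem (s := Set.Ioi 0) _ hpos hm)
      (orderStat_mem_of_forall_mem (s := Set.Ioi 0) _ hpos hn)
      (orderStat_ne_mul_orderStat _ hne hn hm)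
  · exact orderStat_lt_mul_orderStat _ (fun i => Set.mem_iInter.1 hω i) hn hm

/-- with `X, Y` the `m`-th and `n`-th order statistics of `M` i.i.d.
exponential(1) channel gains, `a_n² ∈ (0,1/2]`, `a_m² = 1−a_n²`, and `R > 0`,
`lim_{ρ→∞} P(R_m + R_n − R̄_m − R̄_n < R) = P(Y < 2^{2R}X)`, which is a strictly
positive constant (depending only on `M, m, n, R`), so the probability that the
F-NOMA sum-rate gain is below `R` does not vanish as `ρ → ∞`. -/
theorem fnoma_sum_rate_gap_limit {Ω : Type*} [MeasureSpace Ω]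
    [IsProbabilityMeasure (ℙ : Measure Ω)]
    (M m n : ℕ) (hm : 1 ≤ m) (hmn : m < n) (hnM : n ≤ M)
    (an2 : ℝ) (han2 : an2 ∈ Set.Ioc (0 : ℝ) (1 / 2)) (R : ℝ) (hR : 0 < R)
    (G : Fin M → Ω → ℝ) (hGmeas : ∀ i, Measurable (G i))
    (hindep : iIndepFun G ℙ)
    (hdist : ∀ i, Measure.map (G i) ℙ = expMeasure 1) :
    Tendsto (fun ρ : ℝ =>
        (ℙ {ω |
          Real.logb 2 (1 + orderStat (fun i => G i ω) m * (1 - an2) /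
              (orderStat (fun i => G i ω) m * an2 + 1 / ρ)) +
            Real.logb 2 (1 + ρ * an2 * orderStat (fun i => G i ω) n) -
            (1 / 2) * Real.logb 2 (1 + ρ * orderStat (fun i => G i ω) m) -
            (1 / 2) * Real.logb 2 (1 + ρ * orderStat (fun i => G i ω) n) < R}).toReal)
      atTop
      (nhds ((ℙ {ω | orderStat (fun i => G i ω) n <
        (2 : ℝ) ^ (2 * R) * orderStat (fun i => G i ω) m}).toReal)) ∧
    0 < (ℙ {ω | orderStat (fun i => G i ω) n <
      (2 : ℝ) ^ (2 * R) * orderStat (fun i => G i ω) m}).toReal :=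
  fnoma_sum_rate_gap_limit_general M m n hmn hnM an2 han2 R hR G hGmeas hindep hdist
end
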